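/- arXiv:1202.2402 — 4 statements merged into one kernel-verified Lean document; each statement's English description precedes it below -/
import Mathlib

section
/- For suitably integrable f, g of exponential squared order and s > 0, L₂{f ⋆ g}(s) = L₂{f}(s) · L₂{g}(s). -/
open MeasureTheory Real Filter

open Set ContinuousLinearMap

/-! The substitution `(y, x) ↦ (√(y² + x²), x)` maps the open quadrant onto the wedge
`0 < x < t` with Jacobian `y / t`. Since `exp (-t²s²) = exp (-y²s²) · exp (-x²s²)` when
`t² = y² + x²`, it turns the integrand `t e^{-t²s²} · x f(√(t² - x²)) g(x)` of `L₂{f ⋆ g}`,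
integrated over the wedge, into `y e^{-y²s²} f(y) · x e^{-x²s²} g(x)` on the quadrant, and Fubini
on both sides finishes. Integrability of the convolution integrand on the wedge is inherited
from that of the product, through the same substitution. -/

def wedge : Set (ℝ × ℝ) := {q | 0 < q.2 ∧ q.2 < q.1}

lemma measurableSet_wedge : MeasurableSet wedge :=
  (measurableSet_lt measurable_const measurable_snd).inter
    (measurableSet_lt measurable_snd measurable_fst)

lemma setIntegral_Ioi_intervalIntegral_eq_setIntegral_wedge {E : Type*} [NormedAddCommGroup E]
    [NormedSpace ℝ E] (k : ℝ → ℝ → E) (hk : IntegrableOn (Function.uncurry k) wedge) :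
    ∫ t in Ioi 0, ∫ x in (0:ℝ)..t, k t x = ∫ q in wedge, Function.uncurry k q := by
  have hsection : ∀ t ∈ Ioi (0:ℝ),
      ∫ x in (0:ℝ)..t, k t x = ∫ x, wedge.indicator (Function.uncurry k) (t, x) := by
    intro t (ht : 0 < t)
    have : (fun x => wedge.indicator (Function.uncurry k) (t, x)) = (Ioo 0 t).indicator (k t) := by
      ext x
      simp [indicator_apply, wedge, Function.uncurry]
    rw [this, integral_indicator measurableSet_Ioo, intervalIntegral.integral_of_le ht.le,
      integral_Ioc_eq_integral_Ioo]
  have hwedge_sub : wedge ⊆ Ioi 0 ×ˢ univ := fun q ⟨hx, hxt⟩ => ⟨hx.trans hxt, trivial⟩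
  have hprod := setIntegral_prod _
    ((integrable_indicator_iff measurableSet_wedge).2 hk).integrableOn (s := Ioi (0:ℝ)) (t := univ)
  rw [Measure.restrict_univ, ← Measure.volume_eq_prod, setIntegral_indicator measurableSet_wedge,
    inter_eq_self_of_subset_right hwedge_sub] at hprod
  rw [setIntegral_congr_fun measurableSet_Ioi hsection, ← hprod]

noncomputable def hypotShear (p : ℝ × ℝ) : ℝ × ℝ := (√(p.1 ^ 2 + p.2 ^ 2), p.2)

noncomputable def hypotShearFDeriv (p : ℝ × ℝ) : ℝ × ℝ →L[ℝ] ℝ × ℝ :=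
  ((p.1 / √(p.1 ^ 2 + p.2 ^ 2)) • fst ℝ ℝ ℝ + (p.2 / √(p.1 ^ 2 + p.2 ^ 2)) • snd ℝ ℝ ℝ).prod
    (snd ℝ ℝ ℝ)

lemma det_hypotShearFDeriv (p : ℝ × ℝ) :
    (hypotShearFDeriv p).det = p.1 / √(p.1 ^ 2 + p.2 ^ 2) := by
  rw [hypotShearFDeriv, ContinuousLinearMap.det,
    ← LinearMap.det_toMatrix (Module.Basis.finTwoProd ℝ), Matrix.det_fin_two]
  simp [LinearMap.toMatrix_apply]

lemma hasFDerivAt_hypotShear {p : ℝ × ℝ} (hp : 0 < p.1 ^ 2 + p.2 ^ 2) :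
    HasFDerivAt hypotShear (hypotShearFDeriv p) p := by
  have hsum := ((hasFDerivAt_fst (𝕜 := ℝ) (p := p)).mul hasFDerivAt_fst).add
    ((hasFDerivAt_snd (𝕜 := ℝ) (p := p)).mul hasFDerivAt_snd)
  have hshear : hypotShear = fun q => (√(q.1 * q.1 + q.2 * q.2), q.2) := by
    funext q; simp [hypotShear, sq]
  have hr : √(p.1 ^ 2 + p.2 ^ 2) ≠ 0 := Real.sqrt_ne_zero'.2 hp
  rw [hshear]
  refine ((hsum.sqrt (by simpa [sq] using hp.ne')).prodMk hasFDerivAt_snd).congr_fderiv ?_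
  ext <;> simp [hypotShearFDeriv, sq] <;> field_simp <;> ring

lemma injOn_hypotShear : InjOn hypotShear (Ici 0 ×ˢ univ) := by
  rintro ⟨y, x⟩ ⟨hy : 0 ≤ y, -⟩ ⟨y', x'⟩ ⟨hy' : 0 ≤ y', -⟩ h
  obtain ⟨hr, rfl : x = x'⟩ := Prod.ext_iff.1 h
  have hsq : y ^ 2 = y' ^ 2 := by
    have := congrArg (· ^ 2) hr
    simp only [hypotShear] at this
    rw [sq_sqrt (by positivity), sq_sqrt (by positivity)] at this
    linarith
  rw [(sq_eq_sq₀ hy hy').1 hsq]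

lemma hypotShear_image_Ioi_prod_Ioi : hypotShear '' (Ioi 0 ×ˢ Ioi 0) = wedge := by
  ext ⟨t, x⟩
  constructor
  · rintro ⟨⟨y, x⟩, ⟨hy : 0 < y, hx : 0 < x⟩, h⟩
    obtain ⟨rfl, rfl⟩ := Prod.ext_iff.1 h
    refine ⟨hx, ?_⟩
    calc x = √(x ^ 2) := (sqrt_sq hx.le).symm
      _ < √(y ^ 2 + x ^ 2) := sqrt_lt_sqrt (sq_nonneg x) (by nlinarith)
  · rintro ⟨hx, hxt⟩
    have hts : 0 < t ^ 2 - x ^ 2 := by nlinarith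
    refine ⟨(√(t ^ 2 - x ^ 2), x), ⟨sqrt_pos.2 hts, hx⟩, ?_⟩
    simp [hypotShear, sq_sqrt hts.le, sqrt_sq (hx.trans hxt).le]

section ChangeOfVariables

variable {E : Type*} [NormedAddCommGroup E] [NormedSpace ℝ E]

lemma hasFDerivWithinAt_hypotShear_Ioi_prod_Ioi :
    ∀ p ∈ Ioi (0:ℝ) ×ˢ Ioi (0:ℝ),
      HasFDerivWithinAt hypotShear (hypotShearFDeriv p) (Ioi 0 ×ˢ Ioi 0) p :=
  fun p ⟨(hp : 0 < p.1), _⟩ => (hasFDerivAt_hypotShear (by positivity)).hasFDerivWithinAt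

lemma abs_det_hypotShearFDeriv_smul_eqOn (h : ℝ × ℝ → E) :
    EqOn (fun p => |(hypotShearFDeriv p).det| • h (hypotShear p))
      (fun p => (p.1 / √(p.1 ^ 2 + p.2 ^ 2)) • h (hypotShear p)) (Ioi 0 ×ˢ Ioi 0) :=
  fun p ⟨(hp : 0 < p.1), _⟩ => by
    simp only [det_hypotShearFDeriv, abs_of_nonneg (by positivity : 0 ≤ p.1 / √(p.1 ^ 2 + p.2 ^ 2))]

theorem setIntegral_wedge_eq (h : ℝ × ℝ → E) :
    ∫ q in wedge, h q = ∫ p in Ioi 0 ×ˢ Ioi 0, (p.1 / √(p.1 ^ 2 + p.2 ^ 2)) • h (hypotShear p) := by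
  rw [← hypotShear_image_Ioi_prod_Ioi, integral_image_eq_integral_abs_det_fderiv_smul volume
    (measurableSet_Ioi.prod measurableSet_Ioi) hasFDerivWithinAt_hypotShear_Ioi_prod_Ioi
    (injOn_hypotShear.mono (prod_mono Ioi_subset_Ici_self (subset_univ _)))]
  exact setIntegral_congr_fun (measurableSet_Ioi.prod measurableSet_Ioi)
    (abs_det_hypotShearFDeriv_smul_eqOn h)

theorem integrableOn_wedge_iff (h : ℝ × ℝ → E) :
    IntegrableOn h wedge ↔
      IntegrableOn (fun p => (p.1 / √(p.1 ^ 2 + p.2 ^ 2)) • h (hypotShear p)) (Ioi 0 ×ˢ Ioi 0) := by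
  rw [← hypotShear_image_Ioi_prod_Ioi, integrableOn_image_iff_integrableOn_abs_det_fderiv_smul volume
    (measurableSet_Ioi.prod measurableSet_Ioi) hasFDerivWithinAt_hypotShear_Ioi_prod_Ioi
    (injOn_hypotShear.mono (prod_mono Ioi_subset_Ici_self (subset_univ _)))]
  exact integrableOn_congr_fun (abs_det_hypotShearFDeriv_smul_eqOn h)
    (measurableSet_Ioi.prod measurableSet_Ioi)

end ChangeOfVariables

lemma hypotShear_pullback_L2_convolution_integrand (f g : ℝ → ℝ) (s : ℝ) {p : ℝ × ℝ}
    (hp : 0 < p.1) :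
    (p.1 / √(p.1 ^ 2 + p.2 ^ 2)) •
        Function.uncurry (fun t x => t * exp (-(t ^ 2 * s ^ 2)) * (x * f √(t ^ 2 - x ^ 2) * g x))
          (hypotShear p) =
      p.1 * exp (-(p.1 ^ 2 * s ^ 2)) * f p.1 * (p.2 * exp (-(p.2 ^ 2 * s ^ 2)) * g p.2) := by
  obtain ⟨y, x⟩ := p
  have hr : 0 < y ^ 2 + x ^ 2 := by positivity
  have hsq : √(y ^ 2 + x ^ 2) ^ 2 = y ^ 2 + x ^ 2 := sq_sqrt hr.le
  have hexp : exp (-((y ^ 2 + x ^ 2) * s ^ 2)) = exp (-(y ^ 2 * s ^ 2)) * exp (-(x ^ 2 * s ^ 2)) := by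
    rw [← exp_add]; ring_nf
  simp only [hypotShear, Function.uncurry_apply_pair, smul_eq_mul, hsq, add_sub_cancel_right,
    sqrt_sq hp.le, hexp]
  field_simp

theorem L2_transform_convolution_general (f g : ℝ → ℝ) (s : ℝ)
    (hfint : IntegrableOn (fun x => x * Real.exp (-(x^2 * s^2)) * f x) (Set.Ioi 0))
    (hgint : IntegrableOn (fun x => x * Real.exp (-(x^2 * s^2)) * g x) (Set.Ioi 0)) :
    ∫ t in Set.Ioi (0:ℝ), t * Real.exp (-(t^2 * s^2)) *
        (∫ x in (0:ℝ)..t, x * f (Real.sqrt (t^2 - x^2)) * g x)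
      = (∫ x in Set.Ioi (0:ℝ), x * Real.exp (-(x^2 * s^2)) * f x) *
        (∫ x in Set.Ioi (0:ℝ), x * Real.exp (-(x^2 * s^2)) * g x) := by
  set F : ℝ → ℝ := fun x => x * exp (-(x ^ 2 * s ^ 2)) * f x
  set G : ℝ → ℝ := fun x => x * exp (-(x ^ 2 * s ^ 2)) * g x
  set k : ℝ → ℝ → ℝ := fun t x => t * exp (-(t ^ 2 * s ^ 2)) * (x * f √(t ^ 2 - x ^ 2) * g x)
  have hquadrant : MeasurableSet (Ioi (0:ℝ) ×ˢ Ioi (0:ℝ)) := measurableSet_Ioi.prod measurableSet_Ioi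
  have hpullback : EqOn (fun p => (p.1 / √(p.1 ^ 2 + p.2 ^ 2)) • Function.uncurry k (hypotShear p))
      (fun p => F p.1 * G p.2) (Ioi 0 ×ˢ Ioi 0) :=
    fun p hp => hypotShear_pullback_L2_convolution_integrand f g s hp.1
  have hprod : IntegrableOn (fun p : ℝ × ℝ => F p.1 * G p.2) (Ioi 0 ×ˢ Ioi 0) := by
    rw [IntegrableOn, Measure.volume_eq_prod, ← Measure.prod_restrict]
    exact hfint.mul_prod hgint
  have hk : IntegrableOn (Function.uncurry k) wedge :=
    (integrableOn_wedge_iff _).2 (hprod.congr_fun hpullback.symm hquadrant)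
  calc _ = ∫ t in Ioi 0, ∫ x in (0:ℝ)..t, k t x := by
          simp only [k, intervalIntegral.integral_const_mul]
    _ = ∫ q in wedge, Function.uncurry k q :=
          setIntegral_Ioi_intervalIntegral_eq_setIntegral_wedge k hk
    _ = ∫ p in Ioi 0 ×ˢ Ioi 0, F p.1 * G p.2 := by
          rw [setIntegral_wedge_eq, setIntegral_congr_fun hquadrant hpullback]
    _ = _ := by
          rw [Measure.volume_eq_prod, setIntegral_prod_mul]

theorem L2_transform_convolution (f g : ℝ → ℝ) (s : ℝ) (hs : 0 < s)
    (hforder : Tendsto (fun x => f x * Real.exp (-(x^2))) atTop (nhds 0))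
    (hgorder : Tendsto (fun x => g x * Real.exp (-(x^2))) atTop (nhds 0))
    (hfint : IntegrableOn (fun x => x * Real.exp (-(x^2 * s^2)) * f x) (Set.Ioi 0))
    (hgint : IntegrableOn (fun x => x * Real.exp (-(x^2 * s^2)) * g x) (Set.Ioi 0))
    (hcint : IntegrableOn (fun t => t * Real.exp (-(t^2 * s^2)) *
      (∫ x in (0:ℝ)..t, x * f (Real.sqrt (t^2 - x^2)) * g x)) (Set.Ioi 0)) :
    ∫ t in Set.Ioi (0:ℝ), t * Real.exp (-(t^2 * s^2)) *
        (∫ x in (0:ℝ)..t, x * f (Real.sqrt (t^2 - x^2)) * g x)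
      = (∫ x in Set.Ioi (0:ℝ), x * Real.exp (-(x^2 * s^2)) * f x) *
        (∫ x in Set.Ioi (0:ℝ), x * Real.exp (-(x^2 * s^2)) * g x) :=
  L2_transform_convolution_general f g s hfint hgint
end

section
/- Let g(x) = e^{x²/2} and define the n-fold convolution g^{⋆n} = g ⋆ g ⋆ ⋯ ⋆ g (n factors) with respect to the convolution (f ⋆ g)(t) = ∫₀^t x·f(√(t²−x²))·g(x) dx. Then for all n ≥ 1 and x ≥ 0, g^{⋆n}(x) = x^{2(n−1)} e^{x²/2} / (2^{n−1}·(n−1)!). -/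
open MeasureTheory Real

/-- The L₂-convolution. -/
noncomputable def L2conv (f g : ℝ → ℝ) : ℝ → ℝ :=
  fun t => ∫ x in (0:ℝ)..t, x * f (Real.sqrt (t^2 - x^2)) * g x

/-- n-fold convolution power: `convIter g 0 = g` corresponds to `g^{⋆1}`,
and `convIter g n` corresponds to `g^{⋆(n+1)}`. -/
noncomputable def convIter (g : ℝ → ℝ) : ℕ → ℝ → ℝ
  | 0 => g
  | (n+1) => L2conv (convIter g n) g

/-! For `g y = exp (c y²)` the two exponentials in the integrand of `g^{⋆n} ⋆ g` multiply to the
constant `exp (c t²)`, because the squared arguments `t² - x²` and `x²` add up to `t²`. What is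
left is the polynomial integral `∫₀ᵗ x (t² - x²)ⁿ dx = t^(2n+2) / (2n+2)`, so each convolution with
`g` multiplies the prefactor `x^(2n) / (2ⁿ n!)` by `x² / (2(n+1))`. -/

theorem hasDerivAt_neg_sq_sub_sq_pow_succ_div (t x : ℝ) (n : ℕ) :
    HasDerivAt (fun x : ℝ => -(t^2 - x^2)^(n+1) / (2*(n+1))) (x * (t^2 - x^2)^n) x := by
  have hinner : HasDerivAt (fun x : ℝ => t^2 - x^2) (-(2*x)) x := by
    simpa using (hasDerivAt_pow 2 x).const_sub (t^2)
  refine ((hinner.pow (n+1)).neg.div_const (2*(n+1))).congr_deriv ?_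
  push_cast
  field_simp

theorem integral_mul_sq_sub_sq_pow (t : ℝ) (n : ℕ) :
    ∫ x in (0:ℝ)..t, x * (t^2 - x^2)^n = t^(2*(n+1)) / (2*(n+1)) := by
  rw [intervalIntegral.integral_eq_sub_of_hasDerivAt
    (fun x _ => hasDerivAt_neg_sq_sub_sq_pow_succ_div t x n)
    ((by fun_prop : Continuous _).intervalIntegrable 0 t)]
  rw [sub_self, zero_pow n.succ_ne_zero, zero_pow two_ne_zero, sub_zero, pow_mul]
  ring

theorem L2conv_const_mul_left (a : ℝ) (f g : ℝ → ℝ) (t : ℝ) :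
    L2conv (fun y => a * f y) g t = a * L2conv f g t := by
  simp only [L2conv, ← intervalIntegral.integral_const_mul]
  congr 1
  funext x
  ring

theorem L2conv_sq_pow_mul_exp_mul_sq (c t : ℝ) (n : ℕ) :
    L2conv (fun y => y^(2*n) * exp (c * y^2)) (fun y => exp (c * y^2)) t
      = t^(2*(n+1)) * exp (c * t^2) / (2*(n+1)) := by
  have hintegrand : ∀ x ∈ Set.uIcc (0:ℝ) t,
      x * ((√(t^2 - x^2))^(2*n) * exp (c * √(t^2 - x^2)^2)) * exp (c * x^2)
        = exp (c * t^2) * (x * (t^2 - x^2)^n) := by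
    intro x hx
    have hsq : x^2 ≤ t^2 := sq_le_sq.mpr (by simpa using Set.abs_sub_left_of_mem_uIcc hx)
    rw [pow_mul, Real.sq_sqrt (sub_nonneg.mpr hsq), mul_assoc, mul_assoc, ← exp_add]
    ring_nf
  rw [L2conv, intervalIntegral.integral_congr hintegrand, intervalIntegral.integral_const_mul,
    integral_mul_sq_sub_sq_pow]
  ring

theorem convIter_exp_mul_sq (c : ℝ) (n : ℕ) (x : ℝ) :
    convIter (fun y => exp (c * y^2)) n x = x^(2*n) * exp (c * x^2) / (2^n * n.factorial) := by
  induction n generalizing x with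
  | zero => simp [convIter]
  | succ n ih =>
    have hscaled : convIter (fun y => exp (c * y^2)) n
        = fun y => (2^n * n.factorial : ℝ)⁻¹ * (y^(2*n) * exp (c * y^2)) := by
      funext y
      rw [ih]
      ring
    rw [convIter, hscaled, L2conv_const_mul_left, L2conv_sq_pow_mul_exp_mul_sq,
      Nat.factorial_succ]
    push_cast
    field_simp
    ring

theorem conv_power_exp_sq_general (n : ℕ) (x : ℝ) :
    convIter (fun y => Real.exp (y^2 / 2)) (n - 1) x
      = x^(2*(n-1)) * Real.exp (x^2 / 2) / (2^(n-1) * (n-1).factorial) := by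
  have hg : (fun y : ℝ => exp (y^2 / 2)) = fun y => exp (2⁻¹ * y^2) := by
    funext y
    ring_nf
  rw [hg, convIter_exp_mul_sq]
  ring_nf

theorem conv_power_exp_sq (n : ℕ) (hn : 1 ≤ n) (x : ℝ) (hx : 0 ≤ x) :
    convIter (fun y => Real.exp (y^2 / 2)) (n - 1) x
      = x^(2*(n-1)) * Real.exp (x^2 / 2) / (2^(n-1) * (n-1).factorial) :=
  conv_power_exp_sq_general n x
end

section
/- The function u(x) = 1 + Σ_{n≥1} x^{2n−2}·e^{x²/2} / (n!·2^{n−1}·(n−1)!) is of exponential squared order: u(x)·e^{−x²} → 0 as x → ∞. -/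
/-!
Since `(2n)! ≤ 4ⁿ (n!)²`, the `n`-th term of the series is at most `e^{x²/2}` times the `n`-th
term `(√2 x)^{2n} / (2n)!` of the series of `cosh (√2 x)`, so `u x ≤ 1 + e^{x²/2} cosh (√2 x)`.
As `|√2 x| ≤ x²/4 + 2`, this gives `u x e^{-x²} ≤ 2 e^{2 - x²/4}`.
-/

open Real Filter

open scoped Nat

theorem Nat.factorial_two_mul_le_four_pow_mul (n : ℕ) : (2 * n)! ≤ 4 ^ n * (n ! * n !) := by
  calc (2 * n)! = n.centralBinom * (n ! * n !) := by
        rw [Nat.centralBinom, ← mul_assoc, two_mul, Nat.add_choose_mul_factorial_mul_factorial]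
    _ ≤ 4 ^ n * (n ! * n !) := by gcongr; exact Nat.centralBinom_le_four_pow n

theorem Real.cosh_le_exp_of_abs_le {y a : ℝ} (h : |y| ≤ a) : cosh y ≤ exp a := by
  rw [cosh_eq]
  have hy : exp y ≤ exp a := exp_le_exp.mpr (le_abs_self y |>.trans h)
  have hny : exp (-y) ≤ exp a := exp_le_exp.mpr (neg_le_abs y |>.trans h)
  linarith

theorem pow_div_le_cosh_term (x : ℝ) (n : ℕ) :
    x ^ (2 * n) / ((n + 1)! * 2 ^ n * n !) ≤ (√2 * x) ^ (2 * n) / (2 * n)! := by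
  have hfact : (2 * n)! ≤ 2 ^ n * ((n + 1)! * 2 ^ n * n !) :=
    calc (2 * n)! ≤ 4 ^ n * (n ! * n !) := Nat.factorial_two_mul_le_four_pow_mul n
      _ ≤ 4 ^ n * ((n + 1)! * n !) := by gcongr; exact n.le_succ
      _ = 2 ^ n * ((n + 1)! * 2 ^ n * n !) := by rw [show 4 = 2 * 2 from rfl, mul_pow]; ring
  rw [mul_pow, pow_mul √2, sq_sqrt zero_le_two, div_le_div_iff₀ (by positivity) (by positivity),
    pow_mul x]
  calc (x ^ 2) ^ n * (2 * n)! ≤ (x ^ 2) ^ n * (2 ^ n * ((n + 1)! * 2 ^ n * n !)) := by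
        gcongr; exact_mod_cast hfact
    _ = 2 ^ n * (x ^ 2) ^ n * ((n + 1)! * 2 ^ n * n !) := by ring

theorem tsum_pow_div_le_cosh (x : ℝ) :
    ∑' n : ℕ, x ^ (2 * n) / ((n + 1)! * 2 ^ n * n !) ≤ cosh (√2 * x) := by
  have hcosh := hasSum_cosh (√2 * x)
  have hnonneg (n : ℕ) : 0 ≤ x ^ (2 * n) / ((n + 1)! * 2 ^ n * n !) := by
    rw [pow_mul]; positivity
  refine (Summable.of_nonneg_of_le hnonneg (pow_div_le_cosh_term x) hcosh.summable).tsum_le_tsum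
    (pow_div_le_cosh_term x) hcosh.summable |>.trans_eq hcosh.tsum_eq

theorem abs_sqrt_two_mul_le (x : ℝ) : |√2 * x| ≤ x ^ 2 / 4 + 2 := by
  have h2 := sq_sqrt (zero_le_two : (0 : ℝ) ≤ 2)
  rw [abs_le]
  constructor <;> nlinarith [sq_nonneg (x / 2 - √2), sq_nonneg (x / 2 + √2)]

theorem tendsto_two_mul_exp_two_sub_sq_div_four :
    Tendsto (fun x : ℝ => 2 * exp (2 - x ^ 2 / 4)) atTop (nhds 0) := by
  have hsq : Tendsto (fun x : ℝ => x ^ 2 / 4) atTop atTop :=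
    (tendsto_pow_atTop two_ne_zero).atTop_div_const (by norm_num)
  simpa [← sub_eq_add_neg] using (tendsto_exp_comp_nhds_zero.mpr
    (tendsto_atBot_add_const_left _ 2 (tendsto_neg_atTop_atBot.comp hsq))).const_mul 2

theorem solution_exponential_squared_order :
    Tendsto (fun x : ℝ =>
        (1 + ∑' n : ℕ, x^(2*n) * Real.exp (x^2/2) /
          ((n+1).factorial * 2^n * n.factorial)) * Real.exp (-(x^2)))
      atTop (nhds 0) := by
  refine tendsto_of_tendsto_of_tendsto_of_le_of_le tendsto_const_nhds
    tendsto_two_mul_exp_two_sub_sq_div_four (fun x => ?_) (fun x => ?_)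
  · have hsum : 0 ≤ ∑' n : ℕ, x ^ (2 * n) * exp (x ^ 2 / 2) / ((n + 1)! * 2 ^ n * n !) :=
      tsum_nonneg fun n => by rw [pow_mul]; positivity
    exact mul_nonneg (by linarith) (exp_nonneg _)
  · have hseries : ∑' n : ℕ, x ^ (2 * n) * exp (x ^ 2 / 2) / ((n + 1)! * 2 ^ n * n !) ≤
        exp (x ^ 2 / 2) * exp (x ^ 2 / 4 + 2) := by
      simp_rw [mul_div_right_comm, tsum_mul_right]
      rw [mul_comm]
      gcongr
      exact (tsum_pow_div_le_cosh x).trans (cosh_le_exp_of_abs_le (abs_sqrt_two_mul_le x))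
    have hexp : exp (-x ^ 2) ≤ exp (2 - x ^ 2 / 4) := exp_le_exp.mpr (by linarith [sq_nonneg x])
    calc _ ≤ (1 + exp (x ^ 2 / 2) * exp (x ^ 2 / 4 + 2)) * exp (-x ^ 2) := by gcongr
      _ = exp (-x ^ 2) + exp (2 - x ^ 2 / 4) := by
        rw [add_mul, one_mul, ← exp_add, ← exp_add]; ring_nf
      _ ≤ 2 * exp (2 - x ^ 2 / 4) := by linarith
end

section
/- The function u(x,t) = Σ_{n≥0} (x²/(2t²))^n / (n!)² satisfies the PDE t³·∂/∂t((1/x)·∂u/∂x) + 2u = 0 for all x > 0, t > 0, together with u(0⁺, t) = 1·(series value at x=0) and the equation t³ δ_x u_t = −2u where δ_x = (1/x)∂/∂x. -/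
open Real

/-- The series solution of the PDE `t³ δ_x u_t + 2u = 0`. -/
noncomputable def uSol (x t : ℝ) : ℝ :=
  ∑' n : ℕ, (x^2 / (2*t^2))^n / ((n.factorial : ℝ))^2

/-!
Writing `z = x² / (2t²)`, the solution is `u = F z` with `F z = ∑ zⁿ / (n!)²`
(so `u = I₀(√2 x / t)`). Since `∂ₜ z = -(2/t) z` and `δ_x z = 1/t²`, one gets
`t³ δ_x ∂ₜ u = -2 (z F')'`, so the PDE reduces to the Bessel-type ODE `(z F')' = F`.
On coefficients this is `(n + 1)² / ((n + 1)!)² = 1 / (n!)²`.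
-/

open scoped Nat

section EntireSeries

noncomputable def seriesFun (c : ℕ → ℝ) (z : ℝ) : ℝ := ∑' n, c n * z ^ n

def derivCoeff (c : ℕ → ℝ) (n : ℕ) : ℝ := (n + 1) * c (n + 1)

variable {c : ℕ → ℝ}

theorem summable_mul_pow_of_abs_le_inv_factorial (hc : ∀ n, |c n| ≤ (n ! : ℝ)⁻¹) (r : ℝ) :
    Summable fun n => c n * r ^ n := by
  refine .of_norm_bounded (Real.summable_pow_div_factorial |r|) fun n => ?_
  rw [norm_mul, norm_pow, Real.norm_eq_abs, Real.norm_eq_abs, div_eq_inv_mul]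
  exact mul_le_mul_of_nonneg_right (hc n) (by positivity)

-- `n ≤ 2ⁿ` turns the derivative terms on `|w| ≤ r` into terms of the series at `2r`.
theorem norm_mul_natCast_mul_pow_pred_le {r w : ℝ} (hr : 1 ≤ r) (hw : |w| ≤ r) (n : ℕ) :
    ‖c n * (n * w ^ (n - 1))‖ ≤ |c n * (2 * r) ^ n| := by
  rw [Real.norm_eq_abs, abs_mul, abs_mul, abs_mul, abs_pow, abs_pow, Nat.abs_cast,
    abs_of_pos (by positivity : (0 : ℝ) < 2 * r), mul_pow]
  gcongr
  · exact_mod_cast n.lt_two_pow_self.le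
  · calc |w| ^ (n - 1) ≤ r ^ (n - 1) := by gcongr
      _ ≤ r ^ n := pow_le_pow_right₀ hr (n.sub_le 1)

theorem hasDerivAt_seriesFun (hc : ∀ r, Summable fun n => c n * r ^ n) (z : ℝ) :
    HasDerivAt (seriesFun c) (seriesFun (derivCoeff c) z) z := by
  set r := |z| + 1
  have hr : 1 ≤ r := by simp [r]
  have hbound : ∀ n, ∀ w ∈ Set.Ioo (-r) r, ‖c n * (n * w ^ (n - 1))‖ ≤ |c n * (2 * r) ^ n| :=
    fun n w hw => norm_mul_natCast_mul_pow_pred_le hr (abs_le.2 ⟨hw.1.le, hw.2.le⟩) n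
  have hz : z ∈ Set.Ioo (-r) r := abs_lt.1 (by simp [r])
  have h := hasDerivAt_tsum_of_isPreconnected (hc (2 * r)).abs isOpen_Ioo isPreconnected_Ioo
    (fun n w _ => (hasDerivAt_pow n w).const_mul (c n)) hbound hz (hc z) hz
  have hsum : Summable fun n => c n * (n * z ^ (n - 1)) :=
    .of_norm_bounded (hc (2 * r)).abs fun n => hbound n z hz
  rw [hsum.tsum_eq_zero_add] at h
  refine HasDerivAt.congr_deriv (f := seriesFun c) h ?_
  simp only [seriesFun, derivCoeff, Nat.cast_zero, zero_mul, mul_zero, zero_add,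
    Nat.add_sub_cancel, Nat.cast_add, Nat.cast_one]
  exact tsum_congr fun n => by ring

theorem mul_seriesFun_derivCoeff {z : ℝ} (hc : Summable fun n => n * c n * z ^ n) :
    z * seriesFun (derivCoeff c) z = seriesFun (fun n => n * c n) z := by
  rw [seriesFun, seriesFun, hc.tsum_eq_zero_add, ← tsum_mul_left]
  simp only [derivCoeff, Nat.cast_zero, zero_mul, zero_add, Nat.cast_add, Nat.cast_one]
  exact tsum_congr fun n => by ring

end EntireSeries

theorem hasDerivAt_div_two_mul_sq (y : ℝ) {t : ℝ} (ht : t ≠ 0) :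
    HasDerivAt (fun τ : ℝ => y ^ 2 / (2 * τ ^ 2)) (-(2 / t) * (y ^ 2 / (2 * t ^ 2))) t := by
  have h := (hasDerivAt_const t (y ^ 2)).div ((hasDerivAt_pow 2 t).const_mul 2) (by positivity)
  refine h.congr_deriv ?_
  field_simp
  ring

theorem similarity_reduction {F F' : ℝ → ℝ} (hF : ∀ z, HasDerivAt F (F' z) z)
    (hK : ∀ z, HasDerivAt (fun w => w * F' w) (F z) z) {x t : ℝ} (hx : x ≠ 0) (ht : t ≠ 0) :
    t ^ 3 * ((1 / x) * deriv (fun y => deriv (fun τ => F (y ^ 2 / (2 * τ ^ 2))) t) x)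
      = -2 * F (x ^ 2 / (2 * t ^ 2)) := by
  have h_time : (fun y => deriv (fun τ => F (y ^ 2 / (2 * τ ^ 2))) t)
      = fun y => -(2 / t) * (y ^ 2 / (2 * t ^ 2) * F' (y ^ 2 / (2 * t ^ 2))) := by
    funext y
    have h : HasDerivAt (fun τ => F (y ^ 2 / (2 * τ ^ 2))) _ t :=
      (hF _).comp t (hasDerivAt_div_two_mul_sq y ht)
    rw [h.deriv]
    ring
  have h_space : HasDerivAt (fun y : ℝ => y ^ 2 / (2 * t ^ 2)) (x / t ^ 2) x :=
    ((hasDerivAt_pow 2 x).div_const _).congr_deriv (by field_simp; ring)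
  have h : HasDerivAt
      (fun y => -(2 / t) * (y ^ 2 / (2 * t ^ 2) * F' (y ^ 2 / (2 * t ^ 2)))) _ x :=
    ((hK _).comp x h_space).const_mul (-(2 / t))
  rw [h_time, h.deriv]
  field_simp

noncomputable def invFactorialSq (n : ℕ) : ℝ := ((n ! : ℝ) ^ 2)⁻¹

theorem abs_invFactorialSq_le (n : ℕ) : |invFactorialSq n| ≤ (n ! : ℝ)⁻¹ := by
  rw [abs_of_nonneg (by unfold invFactorialSq; positivity), invFactorialSq, pow_two, mul_inv]
  exact mul_le_of_le_one_right (by positivity)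
    (inv_le_one_of_one_le₀ (Nat.one_le_cast.2 n.factorial_pos))

theorem abs_natCast_mul_invFactorialSq_le (n : ℕ) : |n * invFactorialSq n| ≤ (n ! : ℝ)⁻¹ := by
  have hn : (n : ℝ) ≤ n ! := by exact_mod_cast n.self_le_factorial
  rw [abs_of_nonneg (by unfold invFactorialSq; positivity), invFactorialSq, pow_two, mul_inv,
    ← mul_assoc]
  exact mul_le_of_le_one_left (by positivity) ((div_le_one (by positivity)).2 hn)

theorem derivCoeff_natCast_mul_invFactorialSq :
    derivCoeff (fun n => n * invFactorialSq n) = invFactorialSq := by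
  funext n
  simp only [derivCoeff, invFactorialSq, Nat.factorial_succ, Nat.cast_mul, Nat.cast_add,
    Nat.cast_one]
  field_simp

theorem hasDerivAt_seriesFun_invFactorialSq (z : ℝ) :
    HasDerivAt (seriesFun invFactorialSq) (seriesFun (derivCoeff invFactorialSq) z) z :=
  hasDerivAt_seriesFun (summable_mul_pow_of_abs_le_inv_factorial abs_invFactorialSq_le) z

theorem hasDerivAt_mul_seriesFun_derivCoeff_invFactorialSq (z : ℝ) :
    HasDerivAt (fun w => w * seriesFun (derivCoeff invFactorialSq) w)
      (seriesFun invFactorialSq z) z := by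
  have hsum := summable_mul_pow_of_abs_le_inv_factorial abs_natCast_mul_invFactorialSq_le
  have h := hasDerivAt_seriesFun hsum z
  rw [derivCoeff_natCast_mul_invFactorialSq] at h
  exact h.congr_of_eventuallyEq (.of_forall fun w => mul_seriesFun_derivCoeff (hsum w))

theorem uSol_eq_seriesFun (x t : ℝ) : uSol x t = seriesFun invFactorialSq (x ^ 2 / (2 * t ^ 2)) :=
  tsum_congr fun _ => div_eq_inv_mul _ _

theorem uSol_zero_left (t : ℝ) : uSol 0 t = 1 := by
  rw [uSol, tsum_eq_single 0 fun _ hn => by simp [hn]]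
  simp

theorem uSol_satisfies_PDE :
    (∀ x t : ℝ, 0 < x → 0 < t →
      t^3 * ((1/x) * deriv (fun y => deriv (fun τ => uSol y τ) t) x) = -2 * uSol x t) ∧
    (∀ t : ℝ, 0 < t → uSol 0 t = 1) := by
  refine ⟨fun x t hx ht => ?_, fun t _ => uSol_zero_left t⟩
  simp only [uSol_eq_seriesFun]
  exact similarity_reduction hasDerivAt_seriesFun_invFactorialSq
    hasDerivAt_mul_seriesFun_derivCoeff_invFactorialSq hx.ne' ht.ne'
end
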